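/- Let α ≥ 2 and set h_f(θ) = (2^{α+1} π / ĉ) sin(πα/2) sin^{2α-2}(θ) · Re[e^{-iπα/2} ₂F₁(1-α, α, 1; (1 - i cot θ)/2)], where ĉ = 4 sin²(πα/2) sin(πα) Γ(1 - α/2) Γ(3α/2 - 1) / Γ(α). Then h_f is continuous on (0, π) and bounded: there is C > 0 with |h_f(θ)| ≤ C sin^{α-1}(θ) for all θ ∈ (0, π). -/

import Mathlib

/-- The rising factorial (Pochhammer symbol) `(x)_k = x(x+1)⋯(x+k-1)` in `ℂ`. -/
noncomputable def pochC (x : ℂ) (k : ℕ) : ℂ := ∏ i ∈ Finset.range k, (x + i)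

/-- `f` is the analytic continuation of the Gauss hypergeometric function
`₂F₁(a, b, c; ·)` to the cut plane `ℂ \ [1, ∞)`. -/
def IsTwoF1 (a b c : ℂ) (f : ℂ → ℂ) : Prop :=
  DifferentiableOn ℂ f {z : ℂ | z.im ≠ 0 ∨ z.re < 1} ∧
  ∀ z : ℂ, ‖z‖ < 1 →
    f z = ∑' k : ℕ, pochC a k * pochC b k / (pochC c k * (Nat.factorial k : ℂ)) * z ^ k

/-- The constant `ĉ = 4 sin²(πα/2) sin(πα) Γ(1-α/2) Γ(3α/2-1) / Γ(α)`. -/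
noncomputable def chat (α : ℝ) : ℝ :=
  4 * Real.sin (Real.pi * α / 2) ^ 2 * Real.sin (Real.pi * α) *
    Real.Gamma (1 - α / 2) * Real.Gamma (3 * α / 2 - 1) / Real.Gamma α

/-- `h_f(θ) = (2^{α+1} π / ĉ) sin(πα/2) sin^{2α-2}θ ·
Re[e^{-iπα/2} ₂F₁(1-α, α, 1; (1 - i cot θ)/2)]`. -/
noncomputable def hF (α : ℝ) (f : ℂ → ℂ) (θ : ℝ) : ℝ :=
  (2 ^ (α + 1) * Real.pi / chat α) * Real.sin (Real.pi * α / 2) *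
    Real.sin θ ^ (2 * α - 2) *
    (Complex.exp (-(Real.pi : ℂ) * α / 2 * Complex.I) *
      f ((1 - Complex.I * (Real.cos θ / Real.sin θ)) / 2)).re

/-!
The coefficients of `₂F₁(1-α, α; 1; z)` are bounded, so the series can be differentiated termwise
in the unit disc, where the hypergeometric operator applied termwise produces a telescoping sum;
hence the series solves `z(1-z)F'' + (1-2z)F' - (1-α)αF = 0`. By the identity theorem `f` solves
the same equation on the whole cut plane. On the line `z = (1 - ix)/2`, which carries the argument
`(1 - i cot θ)/2`, the function `u(x) = f((1 - ix)/2)` solves `((1+x²)u')' = α(α-1)u`. Comparing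
with the supersolutions `x^(α-1)` and `x^α` (a maximum principle) bounds the real and imaginary
parts of `u` by `C(1+|x|)^(α-1)`, and `sin θ (1 + |cot θ|) ≤ 2` turns this into
`|h_f(θ)| ≤ C sin^(α-1) θ`.
-/

open Complex Filter Metric Set Topology
open scoped Real

lemma pochC_succ (x : ℂ) (k : ℕ) : pochC x (k + 1) = pochC x k * (x + k) :=
  Finset.prod_range_succ _ _

lemma pochC_ne_zero {x : ℂ} (hx : ∀ i : ℕ, x + i ≠ 0) (k : ℕ) : pochC x k ≠ 0 :=
  Finset.prod_ne_zero_iff.2 fun i _ => hx i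

noncomputable def hypergeomCoeff (a b c : ℂ) (k : ℕ) : ℂ :=
  pochC a k * pochC b k / (pochC c k * (Nat.factorial k : ℂ))

noncomputable def hypergeomSeries (a b c z : ℂ) : ℂ :=
  ∑' k, hypergeomCoeff a b c k * z ^ k

section Coefficients

variable {a b c : ℂ}

lemma hypergeomCoeff_succ (hc : ∀ i : ℕ, c + i ≠ 0) (k : ℕ) :
    (k + 1) * (c + k) * hypergeomCoeff a b c (k + 1) =
      (a + k) * (b + k) * hypergeomCoeff a b c k := by
  have hpoch := pochC_ne_zero hc k
  have hck := hc k
  simp only [hypergeomCoeff, pochC_succ, Nat.factorial_succ]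
  push_cast
  field_simp

lemma exists_forall_le_of_succ_le {u : ℕ → ℝ} {N : ℕ} (h : ∀ k ≥ N, u (k + 1) ≤ u k) :
    ∃ M, ∀ k, u k ≤ M := by
  obtain ⟨M, hM⟩ := ((finite_Iic N).image u).bddAbove
  refine ⟨M, fun k => ?_⟩
  rcases le_total k N with hk | hk
  · exact hM ⟨k, hk, rfl⟩
  · calc u k ≤ u N := by
          induction k, hk using Nat.le_induction with
          | base => rfl
          | succ k hk ih => exact (h k hk).trans ih
      _ ≤ M := hM ⟨N, mem_Iic.2 le_rfl, rfl⟩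

lemma norm_hypergeomCoeff_succ_le (hab : ‖a + b‖ ≤ 1) {k : ℕ} (hk : ‖a * b‖ ≤ k + 1) :
    ‖hypergeomCoeff a b 1 (k + 1)‖ ≤ ‖hypergeomCoeff a b 1 k‖ := by
  have hrec := congrArg norm (hypergeomCoeff_succ (a := a) (b := b) (c := 1)
    (fun i => by norm_cast; omega) k)
  have hfac : ‖(a + k) * (b + k)‖ ≤ ((k : ℝ) + 1) ^ 2 := by
    calc ‖(a + k) * (b + k)‖ = ‖(k : ℂ) ^ 2 + (a + b) * k + a * b‖ := by ring_nf
      _ ≤ (k : ℝ) ^ 2 + ‖a + b‖ * k + ‖a * b‖ := by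
          refine (norm_add₃_le ..).trans ?_
          simp [norm_pow]
      _ ≤ ((k : ℝ) + 1) ^ 2 := by nlinarith
  have hpos : (0 : ℝ) < ((k : ℝ) + 1) ^ 2 := by positivity
  rw [norm_mul, norm_mul, norm_mul, show (k : ℂ) + 1 = ((k + 1 : ℝ) : ℂ) by push_cast; ring,
    show (1 : ℂ) + k = ((k + 1 : ℝ) : ℂ) by push_cast; ring, norm_real, Real.norm_of_nonneg
    (by positivity)] at hrec
  nlinarith [norm_nonneg (hypergeomCoeff a b 1 k), norm_nonneg (hypergeomCoeff a b 1 (k + 1))]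

lemma exists_norm_hypergeomCoeff_le (hab : ‖a + b‖ ≤ 1) :
    ∃ M, ∀ k, ‖hypergeomCoeff a b 1 k‖ ≤ M :=
  exists_forall_le_of_succ_le (N := ⌈‖a * b‖⌉₊) fun k hk =>
    norm_hypergeomCoeff_succ_le hab <| (Nat.le_ceil _).trans <| by
      exact_mod_cast hk.trans (Nat.le_succ k)

end Coefficients

section PowerSeries

lemma summable_mul_add_one_pow_mul_pow_sub {r : ℝ} (hr0 : 0 < r) (hr1 : r < 1) (M : ℝ)
    (p n : ℕ) : Summable fun k : ℕ => M * ((k : ℝ) + 1) ^ p * r ^ (k - n) := by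
  have hgeom : Summable fun k : ℕ => ((k : ℝ) + 1) ^ p * r ^ k := by
    have := (summable_nat_add_iff (f := fun k : ℕ => (k : ℝ) ^ p * r ^ k) 1).2
      (summable_pow_mul_geometric_of_norm_lt_one p (by rwa [Real.norm_of_nonneg hr0.le]))
    refine (this.div_const r).congr fun k => ?_
    simp only [Nat.cast_add, Nat.cast_one, pow_succ]
    field_simp
  have hle : ∀ k : ℕ, ((k : ℝ) + 1) ^ p * r ^ (k - n) ≤ ((k : ℝ) + 1) ^ p * r ^ k / r ^ n := by
    intro k
    rw [mul_div_assoc]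
    gcongr
    rw [le_div_iff₀ (by positivity), ← pow_add]
    exact pow_le_pow_of_le_one hr0.le hr1.le (by omega)
  have := ((hgeom.div_const (r ^ n)).of_nonneg_of_le (fun k => by positivity) hle).mul_left M
  simpa only [mul_assoc] using this

variable {c : ℕ → ℂ} {M : ℝ} {p : ℕ}

lemma norm_mul_pow_sub_le (hc : ∀ k, ‖c k‖ ≤ M * ((k : ℝ) + 1) ^ p) {w : ℂ} {r : ℝ}
    (hw : ‖w‖ ≤ r) (k m : ℕ) : ‖c k * w ^ (k - m)‖ ≤ M * ((k : ℝ) + 1) ^ p * r ^ (k - m) := by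
  rw [norm_mul, norm_pow]
  exact mul_le_mul (hc k) (pow_le_pow_left₀ (norm_nonneg w) hw _) (by positivity)
    ((norm_nonneg _).trans (hc k))

lemma norm_mul_natCast_sub_le (hc : ∀ k, ‖c k‖ ≤ M * ((k : ℝ) + 1) ^ p) (m k : ℕ) :
    ‖c k * ((k - m : ℕ) : ℂ)‖ ≤ M * ((k : ℝ) + 1) ^ (p + 1) := by
  rw [norm_mul, Complex.norm_natCast, pow_succ, ← mul_assoc]
  exact mul_le_mul (hc k) (by norm_cast; omega) (by positivity) ((norm_nonneg _).trans (hc k))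

lemma summable_mul_pow_sub (hc : ∀ k, ‖c k‖ ≤ M * ((k : ℝ) + 1) ^ p) (m : ℕ) {z : ℂ}
    (hz : ‖z‖ < 1) : Summable fun k => c k * z ^ (k - m) := by
  obtain ⟨r, hzr, hr1⟩ := exists_between hz
  exact .of_norm_bounded (summable_mul_add_one_pow_mul_pow_sub ((norm_nonneg z).trans_lt hzr)
    hr1 M p m) fun k => norm_mul_pow_sub_le hc hzr.le k m

-- `k - m` is truncated: for `k < m` the term is the constant `c k`, and the factor
-- `((k - m : ℕ) : ℂ) = 0` correctly kills its derivative.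
theorem hasDerivAt_tsum_mul_pow_sub (hc : ∀ k, ‖c k‖ ≤ M * ((k : ℝ) + 1) ^ p) (m : ℕ) {z : ℂ}
    (hz : ‖z‖ < 1) :
    HasDerivAt (fun w => ∑' k, c k * w ^ (k - m))
      (∑' k, c k * ((k - m : ℕ) : ℂ) * z ^ (k - (m + 1))) z := by
  obtain ⟨r, hzr, hr1⟩ := exists_between hz
  have hr0 : 0 < r := (norm_nonneg z).trans_lt hzr
  refine hasDerivAt_tsum_of_isPreconnected (g := fun k w => c k * w ^ (k - m))
    (g' := fun k w => c k * ((k - m : ℕ) : ℂ) * w ^ (k - (m + 1)))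
    (summable_mul_add_one_pow_mul_pow_sub hr0 hr1 M (p + 1) (m + 1)) isOpen_ball
    (convex_ball 0 r).isPreconnected (fun k w _ => ?_) (fun k w hw => ?_) (mem_ball_self hr0)
    (summable_mul_pow_sub hc m (by simp)) (mem_ball_zero_iff.2 hzr)
  · have := (hasDerivAt_pow (k - m) w).const_mul (c k)
    rwa [← mul_assoc, Nat.sub_sub] at this
  · exact norm_mul_pow_sub_le (norm_mul_natCast_sub_le hc m) (mem_ball_zero_iff.1 hw).le k (m + 1)

end PowerSeries

lemma Summable.hasSum_sub_succ {G : Type*} [AddCommGroup G] [TopologicalSpace G]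
    [IsTopologicalAddGroup G] {v : ℕ → G} (hv : Summable v) :
    HasSum (fun k => v k - v (k + 1)) (v 0) := by
  have := hv.hasSum.sub ((hasSum_nat_add_iff' 1).2 hv.hasSum)
  simpa using this

noncomputable def hypergeomOp (a b c : ℂ) (f : ℂ → ℂ) (z : ℂ) : ℂ :=
  z * (1 - z) * deriv (deriv f) z + (c - (a + b + 1) * z) * deriv f z - a * b * f z

section HypergeometricEquation

variable {a b c : ℂ} {f g : ℂ → ℂ} {z : ℂ}

lemma hypergeomOp_congr (h : f =ᶠ[𝓝 z] g) : hypergeomOp a b c f z = hypergeomOp a b c g z := by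
  simp only [hypergeomOp, h.deriv.deriv_eq, h.deriv_eq, h.eq_of_nhds]

lemma AnalyticOnNhd.hypergeomOp {s : Set ℂ} (hf : AnalyticOnNhd ℂ f s) :
    AnalyticOnNhd ℂ (hypergeomOp a b c f) s :=
  (((analyticOnNhd_id.mul (analyticOnNhd_const.sub analyticOnNhd_id)).mul hf.deriv.deriv).add
    ((analyticOnNhd_const.sub (analyticOnNhd_const.mul analyticOnNhd_id)).mul hf.deriv)).sub
    (analyticOnNhd_const.mul hf)

lemma hasSum_hypergeomOp_terms {d : ℕ → ℂ}
    (hrec : ∀ k : ℕ, (k + 1) * (c + k) * d (k + 1) = (a + k) * (b + k) * d k)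
    (h₁ : Summable fun k : ℕ => d k * k * z ^ (k - 1))
    (h₂ : Summable fun k : ℕ => d k * k * (k - 1 : ℕ) * z ^ (k - 2)) :
    HasSum (fun k : ℕ => z * (1 - z) * (d k * k * (k - 1 : ℕ) * z ^ (k - 2)) +
      (c - (a + b + 1) * z) * (d k * k * z ^ (k - 1)) - a * b * (d k * z ^ k)) 0 := by
  -- By the recurrence the `k`-th term telescopes: it is `v k - v (k + 1)`, where `v k` is
  -- `z` times the `k`-th term of `h₂` plus `c` times that of `h₁`.
  have hv := ((h₂.mul_left z).add (h₁.mul_left c)).hasSum_sub_succ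
  simp only [CharP.cast_eq_zero, mul_zero, zero_mul, add_zero] at hv
  refine hv.congr_fun fun k => ?_
  match k with
  | 0 =>
    simp only [zero_tsub, pow_zero, zero_add]
    push_cast
    linear_combination hrec 0
  | 1 =>
    simp only [tsub_self, Nat.add_one_sub_one, pow_zero]
    push_cast
    linear_combination z * hrec 1
  | n + 2 =>
    simp only [show n + 2 - 1 = n + 1 by omega, show n + 2 + 1 - 1 = n + 2 by omega,
      show n + 2 - 2 = n by omega, show n + 2 + 1 - 2 = n + 1 by omega]
    have := hrec (n + 2)
    push_cast at this ⊢
    linear_combination z ^ (n + 2) * this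

theorem hypergeomOp_hypergeomSeries_eq_zero {M : ℝ} {p : ℕ} (hc : ∀ i : ℕ, c + i ≠ 0)
    (hM : ∀ k, ‖hypergeomCoeff a b c k‖ ≤ M * ((k : ℝ) + 1) ^ p) (hz : ‖z‖ < 1) :
    hypergeomOp a b c (hypergeomSeries a b c) z = 0 := by
  set d := hypergeomCoeff a b c
  have hseries : hypergeomSeries a b c = fun w => ∑' k, d k * w ^ k := rfl
  rw [hseries]
  have hM₁ : ∀ k, ‖d k * k‖ ≤ M * ((k : ℝ) + 1) ^ (p + 1) := by
    simpa using norm_mul_natCast_sub_le hM 0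
  have hM₂ := norm_mul_natCast_sub_le hM₁ 1
  have hd₁ : ∀ w : ℂ, ‖w‖ < 1 →
      HasDerivAt (fun w => ∑' k, d k * w ^ k) (∑' k, d k * k * w ^ (k - 1)) w := by
    intro w hw
    simpa using hasDerivAt_tsum_mul_pow_sub hM 0 hw
  have hd₂ : HasDerivAt (fun w => ∑' k, d k * k * w ^ (k - 1))
      (∑' k, d k * k * (k - 1 : ℕ) * z ^ (k - 2)) z := by
    simpa using hasDerivAt_tsum_mul_pow_sub hM₁ 1 hz
  have hderiv : deriv (fun w => ∑' k, d k * w ^ k) =ᶠ[𝓝 z] fun w => ∑' k, d k * k * w ^ (k - 1) :=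
    eventually_of_mem (isOpen_ball.mem_nhds (mem_ball_zero_iff.2 hz))
      fun w hw => (hd₁ w (mem_ball_zero_iff.1 hw)).deriv
  have h₀ : HasSum (fun k => d k * z ^ k) (∑' k, d k * z ^ k) := by
    simpa using (summable_mul_pow_sub hM 0 hz).hasSum
  have h₁ := (summable_mul_pow_sub hM₁ 1 hz).hasSum
  have h₂ := (summable_mul_pow_sub hM₂ 2 hz).hasSum
  rw [hypergeomOp, hderiv.deriv_eq, hd₂.deriv, (hd₁ z hz).deriv]
  exact (((h₂.mul_left _).add (h₁.mul_left _)).sub (h₀.mul_left _)).unique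
    (hasSum_hypergeomOp_terms (hypergeomCoeff_succ hc) h₁.summable h₂.summable)

end HypergeometricEquation

def cutPlane : Set ℂ := {z | z.im ≠ 0 ∨ z.re < 1}

lemma isOpen_cutPlane : IsOpen cutPlane :=
  (isOpen_ne.preimage continuous_im).union (isOpen_Iio.preimage continuous_re)

lemma zero_mem_cutPlane : (0 : ℂ) ∈ cutPlane := .inr (by simp)

lemma starConvex_cutPlane : StarConvex ℝ 0 cutPlane := by
  refine (starConvex_iff_forall_pos zero_mem_cutPlane).2 fun z hz s t _ ht hst => ?_
  simp only [cutPlane, mem_ofPred_eq, smul_zero, zero_add, smul_im, smul_re, smul_eq_mul] at hz ⊢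
  rcases hz with hz | hz
  · exact .inl (mul_ne_zero ht.ne' hz)
  · right; nlinarith

lemma isPreconnected_cutPlane : IsPreconnected cutPlane :=
  (starConvex_cutPlane.isPathConnected zero_mem_cutPlane).isConnected.isPreconnected

theorem IsTwoF1.hypergeomOp_eqOn_zero {a b c : ℂ} {f : ℂ → ℂ} {M : ℝ} {p : ℕ} (hf : IsTwoF1 a b c f)
    (hc : ∀ i : ℕ, c + i ≠ 0) (hM : ∀ k, ‖hypergeomCoeff a b c k‖ ≤ M * ((k : ℝ) + 1) ^ p) :
    EqOn (hypergeomOp a b c f) 0 cutPlane := by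
  have hf_an : AnalyticOnNhd ℂ f cutPlane := hf.1.analyticOnNhd isOpen_cutPlane
  have heq : f =ᶠ[𝓝 0] hypergeomSeries a b c :=
    eventually_of_mem (ball_mem_nhds 0 one_pos) fun z hz => hf.2 z (mem_ball_zero_iff.1 hz)
  refine hf_an.hypergeomOp.eqOn_zero_of_preconnected_of_eventuallyEq_zero
    isPreconnected_cutPlane zero_mem_cutPlane ?_
  filter_upwards [heq.eventuallyEq_nhds, ball_mem_nhds 0 one_pos] with z hz hz1
  exact (hypergeomOp_congr hz).trans
    (hypergeomOp_hypergeomSeries_eq_zero hc hM (mem_ball_zero_iff.1 hz1))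

lemma line_mem_cutPlane (x : ℝ) : (1 - I * x) / 2 ∈ cutPlane :=
  .inr (by norm_num)

lemma hasDerivAt_comp_line {g : ℂ → ℂ} {x : ℝ} (hg : DifferentiableAt ℂ g ((1 - I * x) / 2)) :
    HasDerivAt (fun y : ℝ => g ((1 - I * y) / 2)) (-I / 2 * deriv g ((1 - I * x) / 2)) x := by
  have hline : HasDerivAt (fun w : ℂ => (1 - I * w) / 2) (-I / 2) x := by
    simpa using (((hasDerivAt_id (x : ℂ)).const_mul I).const_sub 1).div_const 2
  simpa [mul_comm] using (hg.hasDerivAt.comp (x : ℂ) hline).comp_ofReal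

theorem hasDerivAt_one_add_sq_mul_deriv_comp_line {a b : ℂ} {f : ℂ → ℂ} (hab : a + b = 1)
    (hf : AnalyticOnNhd ℂ f cutPlane) (hode : EqOn (hypergeomOp a b 1 f) 0 cutPlane) (x : ℝ) :
    HasDerivAt (fun y : ℝ => ((1 + y ^ 2 : ℝ) : ℂ) * (-I / 2 * deriv f ((1 - I * y) / 2)))
      (-(a * b) * f ((1 - I * x) / 2)) x := by
  have hsq : HasDerivAt (fun y : ℝ => ((1 + y ^ 2 : ℝ) : ℂ)) (2 * x) x := by
    simpa using ((hasDerivAt_pow 2 x).const_add 1).ofReal_comp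
  have h := hsq.fun_mul ((hasDerivAt_comp_line
    (hf.deriv _ (line_mem_cutPlane x)).differentiableAt).const_mul (-I / 2))
  refine h.congr_deriv ?_
  have hz := hode (line_mem_cutPlane x)
  simp only [hypergeomOp, Pi.zero_apply] at hz
  obtain rfl : b = 1 - a := by linear_combination hab
  push_cast
  linear_combination (-1 : ℂ) * hz + deriv (deriv f) ((1 - I * x) / 2) / 4 * I_sq

section Comparison

lemma exists_first_nonpos {W : ℝ → ℝ} {a b : ℝ} (hW : ContinuousOn W (Icc a b)) (hab : a ≤ b)
    (hb : W b ≤ 0) : ∃ x₀ ∈ Icc a b, W x₀ ≤ 0 ∧ ∀ y ∈ Ico a x₀, 0 < W y := by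
  set T := Icc a b ∩ W ⁻¹' Iic 0
  have hT : IsCompact T :=
    isCompact_Icc.of_isClosed_subset (hW.preimage_isClosed_of_isClosed isClosed_Icc isClosed_Iic)
      inter_subset_left
  obtain ⟨hx₀, hWx₀⟩ := hT.sInf_mem ⟨b, ⟨hab, le_rfl⟩, hb⟩
  refine ⟨sInf T, hx₀, hWx₀, fun y hy => ?_⟩
  by_contra! hWy
  have := csInf_le hT.bddBelow ⟨⟨hy.1, hy.2.le.trans hx₀.2⟩, hWy⟩
  linarith [hy.2]

lemma pos_of_supersolution {ρ W W' Q' : ℝ → ℝ} {μ a x : ℝ} (hμ : 0 ≤ μ)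
    (hρ : ∀ y, 0 < ρ y) (hW : ∀ y ≥ a, HasDerivAt W (W' y) y)
    (hQ : ∀ y ≥ a, HasDerivAt (fun t => ρ t * W' t) (Q' y) y)
    (hsuper : ∀ y ≥ a, μ * W y ≤ Q' y) (hWa : 0 < W a) (hW'a : 0 < W' a) (hx : a ≤ x) :
    0 < W x := by
  by_contra! hWx
  obtain ⟨x₀, ⟨hax₀, -⟩, hWx₀, hpos⟩ :=
    exists_first_nonpos (fun y hy => (hW y hy.1).continuousAt.continuousWithinAt) hx hWx
  have hax₀' : a < x₀ := hax₀.lt_of_ne (by rintro rfl; linarith)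
  have hflux : MonotoneOn (fun t => ρ t * W' t) (Icc a x₀) := by
    refine monotoneOn_of_deriv_nonneg (convex_Icc a x₀)
      (fun y hy => (hQ y hy.1).continuousAt.continuousWithinAt) (fun y hy => ?_) fun y hy => ?_
    all_goals rw [interior_Icc] at hy
    · exact (hQ y hy.1.le).differentiableAt.differentiableWithinAt
    · rw [(hQ y hy.1.le).deriv]
      exact (mul_nonneg hμ (hpos y ⟨hy.1.le, hy.2⟩).le).trans (hsuper y hy.1.le)
  have hW' : ∀ y ∈ Icc a x₀, 0 < W' y := fun y hy =>
    pos_of_mul_pos_right ((mul_pos (hρ a) hW'a).trans_le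
      (hflux (left_mem_Icc.2 hax₀) hy hy.1)) (hρ y).le
  have hmono : StrictMonoOn W (Icc a x₀) := by
    refine strictMonoOn_of_deriv_pos (convex_Icc a x₀)
      (fun y hy => (hW y hy.1).continuousAt.continuousWithinAt) fun y hy => ?_
    rw [interior_Icc] at hy
    rw [(hW y hy.1.le).deriv]
    exact hW' y (Ioo_subset_Icc_self hy)
  linarith [hmono (left_mem_Icc.2 hax₀) (right_mem_Icc.2 hax₀) hax₀']

lemma hasDerivAt_one_add_sq_mul_deriv_rpow (p : ℝ) {x : ℝ} (hx : 0 < x) :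
    HasDerivAt (fun y => (1 + y ^ 2) * (p * y ^ (p - 1)))
      (2 * x * (p * x ^ (p - 1)) + (1 + x ^ 2) * (p * ((p - 1) * x ^ (p - 1 - 1)))) x := by
  have hsq : HasDerivAt (fun y : ℝ => 1 + y ^ 2) (2 * x) x := by
    simpa using (hasDerivAt_pow 2 x).const_add 1
  exact hsq.mul ((Real.hasDerivAt_rpow_const (Or.inl hx.ne')).const_mul p)

lemma rpow_legendre_supersolution {p x : ℝ} (hp : 1 ≤ p) (hx : 0 < x) :
    p * (p + 1) * x ^ p ≤
      2 * x * (p * x ^ (p - 1)) + (1 + x ^ 2) * (p * ((p - 1) * x ^ (p - 1 - 1))) := by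
  have h₁ : x ^ (p - 1) = x ^ (p - 1 - 1) * x := by rw [← Real.rpow_add_one hx.ne']; ring_nf
  have h₂ : x ^ p = x ^ (p - 1) * x := by rw [← Real.rpow_add_one hx.ne']; ring_nf
  have : 0 ≤ p * (p - 1) * x ^ (p - 1 - 1) :=
    mul_nonneg (mul_nonneg (by linarith) (by linarith)) (Real.rpow_nonneg hx.le _)
  rw [h₂, h₁]
  nlinarith

theorem le_mul_rpow_of_legendre {v v' : ℝ → ℝ} {α C x : ℝ} (hα : 2 ≤ α) (hC : 0 ≤ C)
    (hv : ∀ y, HasDerivAt v (v' y) y)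
    (hq : ∀ y, HasDerivAt (fun t => (1 + t ^ 2) * v' t) (α * (α - 1) * v y) y)
    (h₁ : v 1 ≤ C) (h₁' : v' 1 ≤ (α - 1) * C) (hx : 1 ≤ x) : v x ≤ C * x ^ (α - 1) := by
  refine le_of_forall_pos_lt_add fun δ hδ => ?_
  have hxα : 0 < x ^ α := Real.rpow_pos_of_pos (by linarith) α
  set ε := δ / x ^ α with hε_def
  have hε : 0 < ε := div_pos hδ hxα
  -- `C t^(α-1)` and `ε t^α` are supersolutions; their sum dominates `v` and `v'` at `t = 1`
  have key := pos_of_supersolution (ρ := fun t => 1 + t ^ 2) (μ := α * (α - 1)) (a := 1)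
    (W := fun t => C * t ^ (α - 1) + ε * t ^ α - v t)
    (W' := fun t => C * ((α - 1) * t ^ (α - 1 - 1)) + ε * (α * t ^ (α - 1)) - v' t)
    (Q' := fun t => C * (2 * t * ((α - 1) * t ^ (α - 1 - 1)) +
        (1 + t ^ 2) * ((α - 1) * ((α - 1 - 1) * t ^ (α - 1 - 1 - 1)))) +
      ε * (2 * t * (α * t ^ (α - 1)) + (1 + t ^ 2) * (α * ((α - 1) * t ^ (α - 1 - 1)))) -
      α * (α - 1) * v t)
    (by nlinarith) (fun t => by positivity) (fun y hy => ?_) (fun y hy => ?_) (fun y hy => ?_)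
    (by simp only [Real.one_rpow]; linarith) (by simp only [Real.one_rpow]; nlinarith) hx
  · have hδ_eq : ε * x ^ α = δ := div_mul_cancel₀ δ hxα.ne'
    linarith
  · have hy0 : y ≠ 0 := by linarith
    exact (((Real.hasDerivAt_rpow_const (Or.inl hy0)).const_mul C).add
      ((Real.hasDerivAt_rpow_const (Or.inl hy0)).const_mul ε)).sub (hv y)
  · have hy0 : 0 < y := by linarith
    refine ((((hasDerivAt_one_add_sq_mul_deriv_rpow (α - 1) hy0).const_mul C).add
      ((hasDerivAt_one_add_sq_mul_deriv_rpow α hy0).const_mul ε)).sub (hq y)).congr_of_eventuallyEq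
      (Eventually.of_forall fun t => ?_)
    simp only [Pi.add_apply, Pi.sub_apply]
    ring
  · have hy0 : 0 < y := by linarith
    have h₁ := mul_le_mul_of_nonneg_left
      (rpow_legendre_supersolution (p := α - 1) (by linarith) hy0) hC
    have h₂ := mul_le_mul_of_nonneg_left (rpow_legendre_supersolution (p := α) (by linarith) hy0)
      hε.le
    have h₃ : 0 ≤ ε * (2 * α * y ^ α) := by have := Real.rpow_nonneg hy0.le α; positivity
    simp only [sub_add_cancel] at h₁ ⊢
    nlinarith

theorem abs_le_mul_rpow_of_legendre {v v' : ℝ → ℝ} {α x : ℝ} (hα : 2 ≤ α)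
    (hv : ∀ y, HasDerivAt v (v' y) y)
    (hq : ∀ y, HasDerivAt (fun t => (1 + t ^ 2) * v' t) (α * (α - 1) * v y) y) (hx : 1 ≤ x) :
    |v x| ≤ (|v 1| + |v' 1|) * x ^ (α - 1) := by
  have hC : 0 ≤ |v 1| + |v' 1| := by positivity
  have h₁' : |v' 1| ≤ (α - 1) * (|v 1| + |v' 1|) := by nlinarith [abs_nonneg (v 1)]
  rw [abs_le]
  constructor
  · have := le_mul_rpow_of_legendre (v := fun y => -v y) (v' := fun y => -v' y) hα hC
      (fun y => (hv y).neg) (fun y => by simpa using (hq y).fun_neg)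
      (by linarith [neg_abs_le (v 1), abs_nonneg (v' 1)]) (by linarith [neg_abs_le (v' 1)]) hx
    linarith
  · exact le_mul_rpow_of_legendre hα hC hv hq (by linarith [le_abs_self (v 1), abs_nonneg (v' 1)])
      (by linarith [le_abs_self (v' 1)]) hx

theorem exists_abs_le_mul_one_add_abs_rpow_of_legendre {v v' : ℝ → ℝ} {α : ℝ} (hα : 2 ≤ α)
    (hv : ∀ y, HasDerivAt v (v' y) y)
    (hq : ∀ y, HasDerivAt (fun t => (1 + t ^ 2) * v' t) (α * (α - 1) * v y) y) :
    ∃ C, ∀ x, |v x| ≤ C * (1 + |x|) ^ (α - 1) := by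
  have hv_neg : ∀ y, HasDerivAt (fun t => v (-t)) (-v' (-y)) y := fun y => by
    simpa [Function.comp_def] using (hv (-y)).comp y (hasDerivAt_neg y)
  have hq_neg : ∀ y, HasDerivAt (fun t => (1 + t ^ 2) * -v' (-t)) (α * (α - 1) * v (-y)) y :=
    fun y => by simpa using ((hq (-y)).comp y (hasDerivAt_neg y)).fun_neg
  obtain ⟨M, hM⟩ := isCompact_Icc.exists_bound_of_continuousOn
    (s := Icc (-1 : ℝ) 1) fun y _ => (hv y).continuousAt.continuousWithinAt
  have hM0 : 0 ≤ M := (norm_nonneg _).trans (hM 0 (by norm_num))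
  have hC₁ : 0 ≤ |v 1| + |v' 1| := by positivity
  have hC₂ : 0 ≤ |v (-1)| + |-v' (-1)| := by positivity
  refine ⟨|v 1| + |v' 1| + (|v (-1)| + |-v' (-1)|) + M, fun x => ?_⟩
  have hP₁ : 1 ≤ (1 + |x|) ^ (α - 1) :=
    Real.one_le_rpow (by linarith [abs_nonneg x]) (by linarith)
  have hP : |x| ^ (α - 1) ≤ (1 + |x|) ^ (α - 1) :=
    Real.rpow_le_rpow (abs_nonneg x) (by linarith) (by linarith)
  have hP₀ : 0 ≤ (1 + |x|) ^ (α - 1) := zero_le_one.trans hP₁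
  rcases le_or_gt 1 x with hx | hx
  · have := abs_le_mul_rpow_of_legendre hα hv hq hx
    rw [abs_of_nonneg (by linarith : (0 : ℝ) ≤ x)] at hP hP₀ ⊢
    nlinarith [mul_le_mul_of_nonneg_left hP hC₁, mul_nonneg (add_nonneg hC₂ hM0) hP₀]
  rcases le_or_gt x (-1) with hx' | hx'
  · have := abs_le_mul_rpow_of_legendre hα hv_neg hq_neg (x := -x) (by linarith)
    rw [neg_neg] at this
    rw [abs_of_neg (by linarith : x < 0)] at hP hP₀ ⊢
    nlinarith [mul_le_mul_of_nonneg_left hP hC₂, mul_nonneg (add_nonneg hC₁ hM0) hP₀]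
  · have := hM x ⟨hx'.le, hx.le⟩
    rw [Real.norm_eq_abs] at this
    nlinarith [mul_le_mul_of_nonneg_left hP₁ hM0, mul_nonneg (add_nonneg hC₁ hC₂) hP₀]

end Comparison

theorem exists_norm_le_mul_one_add_abs_rpow_of_legendre {u u' : ℝ → ℂ} {α : ℝ} (hα : 2 ≤ α)
    (hu : ∀ y, HasDerivAt u (u' y) y)
    (hq : ∀ y, HasDerivAt (fun t => ((1 + t ^ 2 : ℝ) : ℂ) * u' t)
      (((α * (α - 1) : ℝ) : ℂ) * u y) y) :
    ∃ C, ∀ x, ‖u x‖ ≤ C * (1 + |x|) ^ (α - 1) := by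
  have hL : ∀ L : ℂ →L[ℝ] ℝ, ∃ C, ∀ x, |L (u x)| ≤ C * (1 + |x|) ^ (α - 1) := fun L =>
    exists_abs_le_mul_one_add_abs_rpow_of_legendre hα
      (fun y => L.hasFDerivAt.comp_hasDerivAt y (hu y))
      (fun y => by
        simpa only [Function.comp_def, ← real_smul, map_smul, smul_eq_mul] using
          L.hasFDerivAt.comp_hasDerivAt y (hq y))
  obtain ⟨C₁, hC₁⟩ := hL reCLM
  obtain ⟨C₂, hC₂⟩ := hL imCLM
  refine ⟨C₁ + C₂, fun x => ?_⟩
  have h₁ := hC₁ x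
  have h₂ := hC₂ x
  simp only [reCLM_apply, imCLM_apply] at h₁ h₂
  linarith [norm_le_abs_re_add_abs_im (u x)]

lemma sin_rpow_two_mul_mul_one_add_abs_cot_rpow_le {θ β : ℝ} (hβ : 0 ≤ β) (hθ : 0 < Real.sin θ) :
    Real.sin θ ^ (2 * β) * (1 + |Real.cos θ / Real.sin θ|) ^ β ≤ 2 ^ β * Real.sin θ ^ β := by
  have h₂ : Real.sin θ * (1 + |Real.cos θ / Real.sin θ|) ≤ 2 := by
    rw [abs_div, abs_of_pos hθ, mul_add, mul_div_cancel₀ _ hθ.ne', mul_one]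
    linarith [Real.sin_le_one θ, Real.abs_cos_le_one θ]
  calc Real.sin θ ^ (2 * β) * (1 + |Real.cos θ / Real.sin θ|) ^ β
      = Real.sin θ ^ β * (Real.sin θ * (1 + |Real.cos θ / Real.sin θ|)) ^ β := by
        rw [Real.mul_rpow hθ.le (by positivity), ← mul_assoc, ← Real.rpow_add hθ, two_mul]
    _ ≤ Real.sin θ ^ β * 2 ^ β := by gcongr
    _ = 2 ^ β * Real.sin θ ^ β := mul_comm _ _

section HF

variable {α : ℝ} {f : ℂ → ℂ}

lemma continuousOn_hF (hf : Continuous fun x : ℝ => f ((1 - I * x) / 2)) :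
    ContinuousOn (hF α f) (Ioo 0 π) := by
  have hsin : ∀ θ ∈ Ioo 0 π, 0 < Real.sin θ := fun θ hθ => Real.sin_pos_of_pos_of_lt_pi hθ.1 hθ.2
  have hcot : ContinuousOn (fun θ => Real.cos θ / Real.sin θ) (Ioo 0 π) :=
    Real.continuous_cos.continuousOn.div Real.continuous_sin.continuousOn fun θ hθ =>
      (hsin θ hθ).ne'
  have hpow : ContinuousOn (fun θ => Real.sin θ ^ (2 * α - 2)) (Ioo 0 π) := fun θ hθ =>
    (Real.continuous_sin.continuousAt.rpow_const (.inl (hsin θ hθ).ne')).continuousWithinAt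
  have heq : hF α f = fun θ => 2 ^ (α + 1) * π / chat α * Real.sin (π * α / 2) *
      Real.sin θ ^ (2 * α - 2) * (exp (-(π : ℂ) * α / 2 * I) *
        f ((1 - I * ((Real.cos θ / Real.sin θ : ℝ) : ℂ)) / 2)).re := by
    funext θ
    simp only [hF, ofReal_div]
  rw [heq]
  exact (continuousOn_const.mul hpow).mul
    (continuous_re.comp_continuousOn (continuousOn_const.mul (hf.comp_continuousOn hcot)))

lemma exists_abs_hF_le {C : ℝ} (hα : 1 ≤ α)
    (hC : ∀ x : ℝ, ‖f ((1 - I * x) / 2)‖ ≤ C * (1 + |x|) ^ (α - 1)) :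
    ∃ C > 0, ∀ θ ∈ Ioo 0 π, |hF α f θ| ≤ C * Real.sin θ ^ (α - 1) := by
  have hC0 : 0 ≤ C := by simpa using (norm_nonneg _).trans (hC 0)
  set K := 2 ^ (α + 1) * π / chat α * Real.sin (π * α / 2)
  refine ⟨|K| * C * 2 ^ (α - 1) + 1, by positivity, fun θ hθ => ?_⟩
  have hs := Real.sin_pos_of_pos_of_lt_pi hθ.1 hθ.2
  have hre : |(exp (-(π : ℂ) * α / 2 * I) * f ((1 - I * (Real.cos θ / Real.sin θ)) / 2)).re| ≤
      C * (1 + |Real.cos θ / Real.sin θ|) ^ (α - 1) := by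
    refine (abs_re_le_norm _).trans ?_
    rw [norm_mul, show -(π : ℂ) * α / 2 * I = ((-π * α / 2 : ℝ) : ℂ) * I by push_cast; ring,
      norm_exp_ofReal_mul_I, one_mul, ← ofReal_div]
    exact hC _
  have htrig := sin_rpow_two_mul_mul_one_add_abs_cot_rpow_le (β := α - 1) (by linarith) hs
  rw [show 2 * (α - 1) = 2 * α - 2 by ring] at htrig
  have hs₁ : 0 ≤ Real.sin θ ^ (α - 1) := Real.rpow_nonneg hs.le _
  have hs₂ : 0 ≤ Real.sin θ ^ (2 * α - 2) := Real.rpow_nonneg hs.le _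
  calc |hF α f θ| = |K| * (Real.sin θ ^ (2 * α - 2) *
        |(exp (-(π : ℂ) * α / 2 * I) * f ((1 - I * (Real.cos θ / Real.sin θ)) / 2)).re|) := by
        rw [hF, abs_mul, abs_mul _ (Real.sin θ ^ _), abs_of_nonneg hs₂, mul_assoc]
    _ ≤ |K| * C * (Real.sin θ ^ (2 * α - 2) * (1 + |Real.cos θ / Real.sin θ|) ^ (α - 1)) := by
        rw [mul_assoc |K|]
        exact mul_le_mul_of_nonneg_left ((mul_le_mul_of_nonneg_left hre hs₂).trans_eq (by ring))
          (abs_nonneg K)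
    _ ≤ |K| * C * (2 ^ (α - 1) * Real.sin θ ^ (α - 1)) := by gcongr
    _ ≤ (|K| * C * 2 ^ (α - 1) + 1) * Real.sin θ ^ (α - 1) := by nlinarith

end HF

/-- For `α ≥ 2`, `h_f` is continuous on `(0, π)` and satisfies
`|h_f(θ)| ≤ C sin^{α-1} θ` there. -/
theorem hf_continuous_and_bounded (α : ℝ) (hα : 2 ≤ α) (f : ℂ → ℂ)
    (hf : IsTwoF1 ((1 - α : ℝ) : ℂ) (α : ℂ) 1 f) :
    ContinuousOn (hF α f) (Set.Ioo 0 Real.pi) ∧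
    ∃ C > 0, ∀ θ ∈ Set.Ioo (0:ℝ) Real.pi, |hF α f θ| ≤ C * Real.sin θ ^ (α - 1) := by
  have hab : ((1 - α : ℝ) : ℂ) + α = 1 := by push_cast; ring
  obtain ⟨M, hM⟩ := exists_norm_hypergeomCoeff_le (hab.symm ▸ norm_one.le)
  have hf_an : AnalyticOnNhd ℂ f cutPlane := hf.1.analyticOnNhd isOpen_cutPlane
  have hode := hf.hypergeomOp_eqOn_zero (p := 0) (fun i => by norm_cast; omega) (by simpa using hM)
  have hu : ∀ x : ℝ, HasDerivAt (fun y : ℝ => f ((1 - I * y) / 2))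
      (-I / 2 * deriv f ((1 - I * x) / 2)) x := fun x =>
    hasDerivAt_comp_line (hf_an _ (line_mem_cutPlane x)).differentiableAt
  obtain ⟨C, hC⟩ := exists_norm_le_mul_one_add_abs_rpow_of_legendre hα hu fun x =>
    (hasDerivAt_one_add_sq_mul_deriv_comp_line hab hf_an hode x).congr_deriv (by push_cast; ring)
  exact ⟨continuousOn_hF (continuous_iff_continuousAt.2 fun x => (hu x).continuousAt),
    exists_abs_hF_le (by linarith) hC⟩
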